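/- arXiv:1411.6846 — 5 statements merged into one kernel-verified Lean document; each statement's English description precedes it below -/
import Mathlib

section
/- (Concatenation lemma) Let h : ℕ → ℕ, let σ be a string, let A be a set of strings that is h-big above σ, and let (S_τ)_{τ ∈ A} be a family of sets of strings such that S_τ is h-big above τ for every τ ∈ A. Then the union ⋃_{τ ∈ A} S_τ is h-big above σ. -/
/-- A tree is a set of strings (finite sequences of naturals) closed under prefixes. -/
def IsTree (T : Set (List ℕ)) : Prop :=
  ∀ σ ∈ T, ∀ τ : List ℕ, τ <+: σ → τ ∈ T

/-- A leaf of `T` is an element of `T` with no immediate extension in `T`. -/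
def IsLeaf (T : Set (List ℕ)) (τ : List ℕ) : Prop :=
  τ ∈ T ∧ ∀ a : ℕ, τ ++ [a] ∉ T

/-- A tree `T` is `h`-bushy above `σ`: `σ ∈ T`, every element of `T` is comparable
with `σ`, and every non-leaf `τ ∈ T` extending `σ` has at least `h |τ|` immediate
extensions in `T`. -/
def BushyAbove (h : ℕ → ℕ) (σ : List ℕ) (T : Set (List ℕ)) : Prop :=
  IsTree T ∧ σ ∈ T ∧
  (∀ τ ∈ T, τ <+: σ ∨ σ <+: τ) ∧
  (∀ τ ∈ T, σ <+: τ → ¬ IsLeaf T τ → (h τ.length : ℕ∞) ≤ {a : ℕ | τ ++ [a] ∈ T}.encard)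

/-- `B` is `h`-big above `σ` if there is a finite tree, `h`-bushy above `σ`,
all of whose leaves belong to `B`. -/
def BigAbove (h : ℕ → ℕ) (σ : List ℕ) (B : Set (List ℕ)) : Prop :=
  ∃ T : Set (List ℕ), T.Finite ∧ BushyAbove h σ T ∧ ∀ τ, IsLeaf T τ → τ ∈ B

/-- `B` is `h`-small above `σ` if it is not `h`-big above `σ`. -/
def SmallAbove (h : ℕ → ℕ) (σ : List ℕ) (B : Set (List ℕ)) : Prop :=
  ¬ BigAbove h σ B

/-!
Take a finite bushy tree `T` whose leaves lie in `A`, and graft onto each leaf `τ` of `T` a finite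
tree bushy above `τ` whose leaves lie in `S τ`. Distinct leaves of `T` are incomparable, so above
a leaf `τ` the grafted tree coincides with the tree grafted at `τ` and inherits its bushiness and
its leaves; every other node is an inner node of `T`.
-/

lemma IsTree.eq_of_isLeaf_of_prefix {T : Set (List ℕ)} (hT : IsTree T) {τ π : List ℕ}
    (hτ : IsLeaf T τ) (hπ : π ∈ T) (hτπ : τ <+: π) : τ = π := by
  obtain ⟨r, rfl⟩ := hτπ
  cases r with
  | nil => simp
  | cons a r => exact absurd (hT _ hπ _ ⟨r, by simp⟩) (hτ.2 a)

lemma IsTree.eq_of_isLeaf_of_prefix_of_comparable {T : Set (List ℕ)} (hT : IsTree T)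
    {τ τ' ρ : List ℕ} (hτ : IsLeaf T τ) (hτ' : IsLeaf T τ') (hτρ : τ <+: ρ)
    (hρτ' : ρ <+: τ' ∨ τ' <+: ρ) : τ = τ' := by
  rcases hρτ' with hρτ' | hτ'ρ
  · exact hT.eq_of_isLeaf_of_prefix hτ hτ'.1 (hτρ.trans hρτ')
  · rcases List.prefix_or_prefix_of_prefix hτρ hτ'ρ with h | h
    · exact hT.eq_of_isLeaf_of_prefix hτ hτ'.1 h
    · exact (hT.eq_of_isLeaf_of_prefix hτ' hτ.1 h).symm

lemma BushyAbove.prefix_of_isLeaf {h : ℕ → ℕ} {σ τ : List ℕ} {T : Set (List ℕ)}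
    (hT : BushyAbove h σ T) (hτ : IsLeaf T τ) : σ <+: τ :=
  (hT.2.2.1 τ hτ.1).elim
    (fun hτσ => hT.1.eq_of_isLeaf_of_prefix hτ hT.2.1 hτσ ▸ List.prefix_refl τ) id

def graft (T : Set (List ℕ)) (F : List ℕ → Set (List ℕ)) : Set (List ℕ) :=
  T ∪ ⋃ τ ∈ {τ | IsLeaf T τ}, F τ

section Graft

variable {h : ℕ → ℕ} {T : Set (List ℕ)} {F : List ℕ → Set (List ℕ)}

lemma graft_finite (hT : T.Finite) (hF : ∀ τ, IsLeaf T τ → (F τ).Finite) :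
    (graft T F).Finite :=
  hT.union ((hT.subset fun _ hτ => hτ.1).biUnion hF)

lemma isTree_graft (hT : IsTree T) (hF : ∀ τ, IsLeaf T τ → IsTree (F τ)) :
    IsTree (graft T F) := by
  rintro ρ (hρ | hρ) π hπρ
  · exact .inl (hT ρ hρ π hπρ)
  · obtain ⟨τ, hτ, hρτ⟩ := Set.mem_iUnion₂.mp hρ
    exact .inr (Set.mem_biUnion hτ (hF τ hτ ρ hρτ π hπρ))

lemma mem_graft_iff_of_isLeaf (hT : IsTree T) (hF : ∀ τ, IsLeaf T τ → BushyAbove h τ (F τ))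
    {τ ρ : List ℕ} (hτ : IsLeaf T τ) (hτρ : τ <+: ρ) : ρ ∈ graft T F ↔ ρ ∈ F τ := by
  refine ⟨?_, fun hρ => .inr (Set.mem_biUnion hτ hρ)⟩
  rintro (hρ | hρ)
  · obtain rfl := hT.eq_of_isLeaf_of_prefix hτ hρ hτρ
    exact (hF τ hτ).2.1
  · obtain ⟨τ', hτ', hρτ'⟩ := Set.mem_iUnion₂.mp hρ
    obtain rfl := hT.eq_of_isLeaf_of_prefix_of_comparable hτ hτ' hτρ ((hF τ' hτ').2.2.1 ρ hρτ')
    exact hρτ'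

lemma extensions_graft_of_isLeaf (hT : IsTree T) (hF : ∀ τ, IsLeaf T τ → BushyAbove h τ (F τ))
    {τ ρ : List ℕ} (hτ : IsLeaf T τ) (hτρ : τ <+: ρ) :
    {a | ρ ++ [a] ∈ graft T F} = {a | ρ ++ [a] ∈ F τ} :=
  Set.ext fun _ => mem_graft_iff_of_isLeaf hT hF hτ (hτρ.trans (List.prefix_append _ _))

lemma isLeaf_graft_iff_of_isLeaf (hT : IsTree T) (hF : ∀ τ, IsLeaf T τ → BushyAbove h τ (F τ))
    {τ ρ : List ℕ} (hτ : IsLeaf T τ) (hτρ : τ <+: ρ) :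
    IsLeaf (graft T F) ρ ↔ IsLeaf (F τ) ρ := by
  have hext := extensions_graft_of_isLeaf hT hF hτ hτρ
  simp only [Set.ext_iff, Set.mem_ofPred_eq] at hext
  simp only [IsLeaf, mem_graft_iff_of_isLeaf hT hF hτ hτρ, hext]

lemma inner_or_above_leaf_of_mem_graft (hT : IsTree T)
    (hF : ∀ τ, IsLeaf T τ → BushyAbove h τ (F τ)) {ρ : List ℕ} (hρ : ρ ∈ graft T F) :
    (ρ ∈ T ∧ ¬ IsLeaf T ρ) ∨ ∃ τ, IsLeaf T τ ∧ τ <+: ρ := by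
  have hρ' : ρ ∈ T ∨ ∃ τ, IsLeaf T τ ∧ τ <+: ρ := by
    rcases hρ with hρ | hρ
    · exact .inl hρ
    · obtain ⟨τ, hτ, hρτ⟩ := Set.mem_iUnion₂.mp hρ
      exact ((hF τ hτ).2.2.1 ρ hρτ).imp (hT τ hτ.1 ρ) fun hτρ => ⟨τ, hτ, hτρ⟩
  by_cases hleaf : IsLeaf T ρ
  · exact .inr ⟨ρ, hleaf, List.prefix_refl ρ⟩
  · exact hρ'.imp_left fun hρT => ⟨hρT, hleaf⟩

lemma exists_isLeaf_of_isLeaf_graft (hT : IsTree T)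
    (hF : ∀ τ, IsLeaf T τ → BushyAbove h τ (F τ)) {ρ : List ℕ} (hρ : IsLeaf (graft T F) ρ) :
    ∃ τ, IsLeaf T τ ∧ IsLeaf (F τ) ρ := by
  rcases inner_or_above_leaf_of_mem_graft hT hF hρ.1 with ⟨hρT, hinner⟩ | ⟨τ, hτ, hτρ⟩
  · obtain ⟨a, ha⟩ : ∃ a, ρ ++ [a] ∈ T := by simpa [IsLeaf, hρT] using hinner
    exact absurd (.inl ha) (hρ.2 a)
  · exact ⟨τ, hτ, (isLeaf_graft_iff_of_isLeaf hT hF hτ hτρ).1 hρ⟩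

lemma BushyAbove.graft {σ : List ℕ} (hT : BushyAbove h σ T)
    (hF : ∀ τ, IsLeaf T τ → BushyAbove h τ (F τ)) : BushyAbove h σ (graft T F) := by
  refine ⟨isTree_graft hT.1 fun τ hτ => (hF τ hτ).1, .inl hT.2.1, ?_, ?_⟩
  · rintro ρ (hρ | hρ)
    · exact hT.2.2.1 ρ hρ
    · obtain ⟨τ, hτ, hρτ⟩ := Set.mem_iUnion₂.mp hρ
      have hστ := hT.prefix_of_isLeaf hτ
      rcases (hF τ hτ).2.2.1 ρ hρτ with hρτ | hτρ
      · exact List.prefix_or_prefix_of_prefix hρτ hστ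
      · exact .inr (hστ.trans hτρ)
  · intro ρ hρ hσρ hnotLeaf
    rcases inner_or_above_leaf_of_mem_graft hT.1 hF hρ with ⟨hρT, hinner⟩ | ⟨τ, hτ, hτρ⟩
    · exact (hT.2.2.2 ρ hρT hσρ hinner).trans (Set.encard_mono fun _ => .inl)
    · rw [extensions_graft_of_isLeaf hT.1 hF hτ hτρ]
      rw [isLeaf_graft_iff_of_isLeaf hT.1 hF hτ hτρ] at hnotLeaf
      exact (hF τ hτ).2.2.2 ρ ((mem_graft_iff_of_isLeaf hT.1 hF hτ hτρ).1 hρ) hτρ hnotLeaf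

end Graft

/-- Concatenation lemma: if `A` is `h`-big above `σ` and `S τ` is `h`-big above `τ`
for every `τ ∈ A`, then `⋃ τ ∈ A, S τ` is `h`-big above `σ`. -/
theorem concatenation (h : ℕ → ℕ) (σ : List ℕ) (A : Set (List ℕ))
    (hA : BigAbove h σ A) (S : List ℕ → Set (List ℕ))
    (hS : ∀ τ ∈ A, BigAbove h τ (S τ)) :
    BigAbove h σ (⋃ τ ∈ A, S τ) := by
  obtain ⟨T, hTfin, hT, hTA⟩ := hA
  choose! F hFfin hF hFS using hS
  refine ⟨graft T F, graft_finite hTfin fun τ hτ => hFfin τ (hTA τ hτ),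
    hT.graft fun τ hτ => hF τ (hTA τ hτ), fun ρ hρ => ?_⟩
  obtain ⟨τ, hτ, hρF⟩ := exists_isLeaf_of_isLeaf_graft hT.1 (fun τ hτ => hF τ (hTA τ hτ)) hρ
  exact Set.mem_biUnion (hTA τ hτ) (hFS τ (hTA τ hτ) ρ hρF)
end

section
/- Let h : ℕ → ℕ and let σ be a string. If a set of strings A is h-big above σ and a set of strings B is h-small above σ, then there exists a string τ ∈ A extending σ such that B is h-small above τ. -/
/-!
If `B` were `h`-big above every `τ ∈ A` extending `σ`, then grafting, onto each leaf of a finite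
`h`-bushy tree witnessing that `A` is big above `σ`, a finite `h`-bushy tree witnessing that `B`
is big above that leaf would give a finite `h`-bushy tree above `σ` with all leaves in `B`.
-/

lemma IsLeaf.eq_of_prefix {T : Set (List ℕ)} (hT : IsTree T) {τ ρ : List ℕ}
    (hτ : IsLeaf T τ) (hρ : ρ ∈ T) (hp : τ <+: ρ) : ρ = τ := by
  obtain ⟨rest, rfl⟩ := hp
  cases rest with
  | nil => simp
  | cons a r => exact absurd (hT _ hρ _ ⟨r, by simp⟩) (hτ.2 a)

lemma IsLeaf.eq_of_isLeaf {T : Set (List ℕ)} (hT : IsTree T) {τ τ' ρ : List ℕ}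
    (hτ : IsLeaf T τ) (hτ' : IsLeaf T τ') (hp : τ <+: ρ) (hp' : τ' <+: ρ) : τ = τ' := by
  rcases List.prefix_or_prefix_of_prefix hp hp' with h | h
  · exact (hτ.eq_of_prefix hT hτ'.1 h).symm
  · exact hτ'.eq_of_prefix hT hτ.1 h

def graftAtLeaves (T : Set (List ℕ)) (S : List ℕ → Set (List ℕ)) : Set (List ℕ) :=
  {ρ | ρ ∈ T ∨ ∃ τ, IsLeaf T τ ∧ ρ ∈ S τ}

section graftAtLeaves

variable {h : ℕ → ℕ} {T : Set (List ℕ)} {S : List ℕ → Set (List ℕ)}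

lemma graftAtLeaves_finite (hT : T.Finite) (hS : ∀ τ, IsLeaf T τ → (S τ).Finite) :
    (graftAtLeaves T S).Finite := by
  refine (hT.union ((hT.subset fun τ hτ => hτ.1).biUnion hS)).subset ?_
  rintro ρ (hρT | ⟨τ, hτ, hρS⟩)
  · exact Or.inl hρT
  · exact Or.inr (Set.mem_biUnion hτ hρS)

lemma mem_graftAtLeaves_cases (hT : IsTree T) (hS : ∀ τ, IsLeaf T τ → BushyAbove h τ (S τ))
    {ρ : List ℕ} (hρ : ρ ∈ graftAtLeaves T S) :
    (ρ ∈ T ∧ ¬ IsLeaf T ρ) ∨ ∃ τ, IsLeaf T τ ∧ τ <+: ρ ∧ ρ ∈ S τ := by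
  obtain hρT | hρS : ρ ∈ T ∨ ∃ τ, IsLeaf T τ ∧ τ <+: ρ ∧ ρ ∈ S τ := by
    rcases hρ with hρT | ⟨τ, hτ, hρS⟩
    · exact Or.inl hρT
    · rcases (hS τ hτ).2.2.1 ρ hρS with hp | hp
      · exact Or.inl (hT τ hτ.1 ρ hp)
      · exact Or.inr ⟨τ, hτ, hp, hρS⟩
  · by_cases hl : IsLeaf T ρ
    · exact Or.inr ⟨ρ, hl, List.prefix_rfl, (hS ρ hl).2.1⟩
    · exact Or.inl ⟨hρT, hl⟩
  · exact Or.inr hρS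

lemma mem_of_mem_graftAtLeaves (hT : IsTree T) (hS : ∀ τ, IsLeaf T τ → BushyAbove h τ (S τ))
    {τ μ : List ℕ} (hτ : IsLeaf T τ) (hμ : μ ∈ graftAtLeaves T S) (hp : τ <+: μ)
    (hne : μ ≠ τ) : μ ∈ S τ := by
  rcases mem_graftAtLeaves_cases hT hS hμ with ⟨hμT, -⟩ | ⟨τ', hτ', hp', hμS⟩
  · exact absurd (hτ.eq_of_prefix hT hμT hp) hne
  · rwa [hτ'.eq_of_isLeaf hT hτ hp' hp] at hμS

lemma bushyAbove_graftAtLeaves {σ : List ℕ} (hT : BushyAbove h σ T)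
    (hS : ∀ τ, IsLeaf T τ → BushyAbove h τ (S τ)) :
    BushyAbove h σ (graftAtLeaves T S) := by
  have hσ_prefix : ∀ τ, IsLeaf T τ → σ <+: τ := fun τ hτ => hT.prefix_of_isLeaf hτ
  obtain ⟨hTtree, hσT, hTcomp, hTbushy⟩ := hT
  refine ⟨?_, Or.inl hσT, ?_, ?_⟩
  · rintro ρ (hρT | ⟨τ, hτ, hρS⟩) μ hμ
    · exact Or.inl (hTtree ρ hρT μ hμ)
    · exact Or.inr ⟨τ, hτ, (hS τ hτ).1 ρ hρS μ hμ⟩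
  · intro ρ hρ
    rcases mem_graftAtLeaves_cases hTtree hS hρ with ⟨hρT, -⟩ | ⟨τ, hτ, hp, -⟩
    · exact hTcomp ρ hρT
    · exact Or.inr ((hσ_prefix τ hτ).trans hp)
  · intro ρ hρ hσρ hnl
    have encard_mono : ∀ R ⊆ graftAtLeaves T S,
        {a | ρ ++ [a] ∈ R}.encard ≤ {a | ρ ++ [a] ∈ graftAtLeaves T S}.encard :=
      fun R hR => Set.encard_le_encard fun a ha => hR ha
    rcases mem_graftAtLeaves_cases hTtree hS hρ with ⟨hρT, hl⟩ | ⟨τ, hτ, hp, hρS⟩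
    · exact (hTbushy ρ hρT hσρ hl).trans (encard_mono T fun _ => Or.inl)
    · have hnlS : ¬ IsLeaf (S τ) ρ := fun hl => hnl ⟨hρ, fun a ha => hl.2 a
        (mem_of_mem_graftAtLeaves hTtree hS hτ ha (hp.trans (List.prefix_append ρ [a]))
          (by rintro rfl; simpa using hp.length_le))⟩
      exact ((hS τ hτ).2.2.2 ρ hρS hp hnlS).trans
        (encard_mono (S τ) fun μ hμ => Or.inr ⟨τ, hτ, hμ⟩)

lemma exists_isLeaf_of_isLeaf_graftAtLeaves (hT : IsTree T)
    (hS : ∀ τ, IsLeaf T τ → BushyAbove h τ (S τ)) {ρ : List ℕ}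
    (hρ : IsLeaf (graftAtLeaves T S) ρ) : ∃ τ, IsLeaf T τ ∧ IsLeaf (S τ) ρ := by
  rcases mem_graftAtLeaves_cases hT hS hρ.1 with ⟨hρT, hl⟩ | ⟨τ, hτ, -, hρS⟩
  · exact absurd ⟨hρT, fun a ha => hρ.2 a (Or.inl ha)⟩ hl
  · exact ⟨τ, hτ, hρS, fun a ha => hρ.2 a (Or.inr ⟨τ, hτ, ha⟩)⟩

end graftAtLeaves

theorem BigAbove.trans {h : ℕ → ℕ} {σ : List ℕ} {A B : Set (List ℕ)}
    (hA : BigAbove h σ A) (hAB : ∀ τ ∈ A, σ <+: τ → BigAbove h τ B) :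
    BigAbove h σ B := by
  obtain ⟨T, hTfin, hT, hTA⟩ := hA
  have hS : ∀ τ, ∃ S : Set (List ℕ), IsLeaf T τ →
      S.Finite ∧ BushyAbove h τ S ∧ ∀ ρ, IsLeaf S ρ → ρ ∈ B := by
    intro τ
    by_cases hτ : IsLeaf T τ
    · obtain ⟨S, hS⟩ := hAB τ (hTA τ hτ) (hT.prefix_of_isLeaf hτ)
      exact ⟨S, fun _ => hS⟩
    · exact ⟨∅, fun hτ' => absurd hτ' hτ⟩
  choose S hS using hS
  have hSbushy : ∀ τ, IsLeaf T τ → BushyAbove h τ (S τ) := fun τ hτ => (hS τ hτ).2.1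
  refine ⟨graftAtLeaves T S, graftAtLeaves_finite hTfin fun τ hτ => (hS τ hτ).1,
    bushyAbove_graftAtLeaves hT hSbushy, fun ρ hρ => ?_⟩
  obtain ⟨τ, hτ, hρτ⟩ := exists_isLeaf_of_isLeaf_graftAtLeaves hT.1 hSbushy hρ
  exact (hS τ hτ).2.2 ρ hρτ

/-- If `A` is `h`-big above `σ` and `B` is `h`-small above `σ`, then some `τ ∈ A`
extending `σ` is such that `B` is still `h`-small above `τ`. -/
theorem big_meets_small (h : ℕ → ℕ) (σ : List ℕ) (A B : Set (List ℕ))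
    (hA : BigAbove h σ A) (hB : SmallAbove h σ B) :
    ∃ τ ∈ A, σ <+: τ ∧ SmallAbove h τ B := by
  by_contra! hsmall
  exact hB (hA.trans fun τ hτA hστ => not_not.mp (hsmall τ hτA hστ))
end

section
/- (Bigness pigeonhole) Let g : ℕ → ℕ, let N ≥ 1, let σ be a string, and let S_1, …, S_N be sets of strings. If the union ⋃_{j=1}^{N} S_j is (N·g)-big above σ (where N·g denotes the function n ↦ N·g(n)), then there exists some j ∈ {1, …, N} such that S_j is g-big above σ. -/
theorem Finset.exists_subset_le_card_of_forall_exists {α ι : Type*} [Fintype ι]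
    {s : Finset α} (hs : s.Nonempty) {n : ℕ} {P : α → ι → Prop}
    (h : ∀ a ∈ s, ∃ i, P a i) (hcard : Fintype.card ι * n ≤ s.card) :
    ∃ i, ∃ t ⊆ s, t.Nonempty ∧ n ≤ t.card ∧ ∀ a ∈ t, P a i := by
  classical
  obtain ⟨a₀, ha₀⟩ := hs
  have : Nonempty ι := ⟨(h a₀ ha₀).choose⟩
  choose! f hf using h
  obtain ⟨i, hi, hn⟩ := Finset.exists_le_card_fiber_of_mul_le_card_of_maps_to
    (fun a ha => Finset.mem_image_of_mem f ha) ⟨f a₀, Finset.mem_image_of_mem f ha₀⟩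
    ((Nat.mul_le_mul_right n (Finset.card_le_univ _)).trans hcard)
  obtain ⟨a, ha, rfl⟩ := Finset.mem_image.mp hi
  refine ⟨f a, _, Finset.filter_subset _ s, ⟨a, by simp [ha]⟩, hn, ?_⟩
  intro b hb
  obtain ⟨hbs, hfb⟩ := Finset.mem_filter.mp hb
  exact hfb ▸ hf b hbs

theorem isTree_setOf_prefix (τ : List ℕ) : IsTree {ρ | ρ <+: τ} :=
  fun _ hρ _ hπ => hπ.trans hρ

theorem isLeaf_setOf_prefix_iff {τ ρ : List ℕ} : IsLeaf {ρ | ρ <+: τ} ρ ↔ ρ = τ := by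
  constructor
  · rintro ⟨⟨t, rfl⟩, hno⟩
    cases t with
    | nil => simp
    | cons b t => exact absurd ⟨t, by simp⟩ (hno b)
  · rintro rfl
    exact ⟨List.prefix_refl ρ, fun a h => by simpa using h.length_le⟩

theorem bigAbove_of_mem {g : ℕ → ℕ} {τ : List ℕ} {B : Set (List ℕ)} (hτ : τ ∈ B) :
    BigAbove g τ B := by
  refine ⟨{ρ | ρ <+: τ}, by simpa using τ.inits.finite_toSet,
    ⟨isTree_setOf_prefix τ, List.prefix_refl τ, fun ρ hρ => Or.inl hρ, ?_⟩, ?_⟩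
  · intro ρ hρ hτρ hnl
    exact absurd (isLeaf_setOf_prefix_iff.2 (hρ.eq_of_length
      (le_antisymm hρ.length_le hτρ.length_le))) hnl
  · intro ρ hρ
    exact isLeaf_setOf_prefix_iff.1 hρ ▸ hτ

section Gluing

variable {h : ℕ → ℕ} {τ ρ : List ℕ} {a : ℕ} {T : Set (List ℕ)}

theorem BushyAbove.prefix_or_append_prefix (hT : BushyAbove h (τ ++ [a]) T) (hρ : ρ ∈ T) :
    ρ <+: τ ∨ τ ++ [a] <+: ρ := by
  rcases hT.2.2.1 ρ hρ with hc | hc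
  · rcases List.prefix_concat_iff.mp hc with rfl | hc
    · exact Or.inr (List.prefix_refl _)
    · exact Or.inl hc
  · exact Or.inr hc

theorem BushyAbove.eq_of_append_prefix (hT : BushyAbove h (τ ++ [a]) T) (hρ : ρ ∈ T)
    {b : ℕ} (hb : τ ++ [b] <+: ρ) : b = a := by
  rcases hT.prefix_or_append_prefix hρ with hc | hc
  · have := hb.length_le.trans hc.length_le
    simp at this
  · simpa using List.prefix_of_prefix_length_le hb hc (by simp)

/-- Distinct children of `τ` root disjoint subtrees, so above `τ ++ [a]` the union
coincides with the tree chosen for `a`. -/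
theorem mem_biUnion_iff_of_append_prefix {A : Finset ℕ} {T : ℕ → Set (List ℕ)}
    (hT : ∀ b ∈ A, BushyAbove h (τ ++ [b]) (T b)) (ha : a ∈ A) (hρ : τ ++ [a] <+: ρ) :
    ρ ∈ ⋃ b ∈ A, T b ↔ ρ ∈ T a := by
  refine ⟨fun hmem => ?_, fun hmem => Set.mem_biUnion ha hmem⟩
  obtain ⟨b, hb, hρb⟩ := Set.mem_iUnion₂.mp hmem
  exact (hT b hb).eq_of_append_prefix hρb hρ ▸ hρb

theorem bigAbove_of_forall_append {g : ℕ → ℕ} {B : Set (List ℕ)} {A : Finset ℕ}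
    (hA : A.Nonempty) (hcard : g τ.length ≤ A.card) (hbig : ∀ a ∈ A, BigAbove g (τ ++ [a]) B) :
    BigAbove g τ B := by
  choose! T hTfin hT hTleaf using hbig
  have hsub : ∀ a ∈ A, T a ⊆ ⋃ b ∈ A, T b := fun a ha => Set.subset_biUnion_of_mem ha
  obtain ⟨a₀, ha₀⟩ := hA
  refine ⟨⋃ a ∈ A, T a, A.finite_toSet.biUnion hTfin, ⟨?_, ?_, ?_, ?_⟩, ?_⟩
  · intro ρ hρ π hπ
    obtain ⟨a, ha, hρa⟩ := Set.mem_iUnion₂.mp hρ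
    exact hsub a ha ((hT a ha).1 ρ hρa π hπ)
  · exact hsub a₀ ha₀ ((hT a₀ ha₀).1 _ (hT a₀ ha₀).2.1 τ (List.prefix_append τ [a₀]))
  · intro ρ hρ
    obtain ⟨a, ha, hρa⟩ := Set.mem_iUnion₂.mp hρ
    exact (hT a ha).prefix_or_append_prefix hρa |>.imp_right
      ((List.prefix_append τ [a]).trans)
  · intro ρ hρ hτρ hnl
    obtain rfl | hne := eq_or_ne ρ τ
    · calc (g ρ.length : ℕ∞) ≤ (A : Set ℕ).encard := by simpa using hcard
        _ ≤ {b | ρ ++ [b] ∈ ⋃ a ∈ A, T a}.encard :=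
          Set.encard_le_encard fun b hb => hsub b hb (hT b hb).2.1
    obtain ⟨a, ha, hρa⟩ := Set.mem_iUnion₂.mp hρ
    have hext : τ ++ [a] <+: ρ := ((hT a ha).prefix_or_append_prefix hρa).resolve_left
      fun hρτ => hne (hρτ.eq_of_length (le_antisymm hρτ.length_le hτρ.length_le))
    have hchildren : {b | ρ ++ [b] ∈ ⋃ a ∈ A, T a} = {b | ρ ++ [b] ∈ T a} := Set.ext fun b =>
      mem_biUnion_iff_of_append_prefix hT ha (hext.trans (List.prefix_append ρ [b]))
    have hnl' : ¬ IsLeaf (T a) ρ := fun hl =>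
      hnl ⟨hρ, fun b hb => hl.2 b (hchildren ▸ hb : b ∈ {b | ρ ++ [b] ∈ T a})⟩
    exact hchildren ▸ (hT a ha).2.2.2 ρ hρa hext hnl'
  · rintro ρ ⟨hρ, hno⟩
    obtain ⟨a, ha, hρa⟩ := Set.mem_iUnion₂.mp hρ
    exact hTleaf a ha ρ ⟨hρa, fun b hb => hno b (hsub a ha hb)⟩

end Gluing

/-- Induction from the leaves of `T` up: at an inner node, pigeonhole the children among
the `S i` that the induction hypothesis assigns to them. -/
theorem exists_bigAbove_of_bushyAbove_card_mul {ι : Type*} [Fintype ι] {g : ℕ → ℕ}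
    {σ : List ℕ} {T : Set (List ℕ)} {S : ι → Set (List ℕ)} (hTfin : T.Finite)
    (hT : BushyAbove (fun n => Fintype.card ι * g n) σ T)
    (hleaf : ∀ τ, IsLeaf T τ → τ ∈ ⋃ i, S i) {τ : List ℕ} (hτ : τ ∈ T) (hστ : σ <+: τ) :
    ∃ i, BigAbove g τ (S i) := by
  obtain ⟨M, hM⟩ := (hTfin.image List.length).bddAbove
  induction hk : M + 1 - τ.length generalizing τ with
  | zero => have := hM ⟨τ, hτ, rfl⟩; omega
  | succ k ih =>
    by_cases hl : IsLeaf T τ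
    · obtain ⟨i, hi⟩ := Set.mem_iUnion.mp (hleaf τ hl)
      exact ⟨i, bigAbove_of_mem hi⟩
    have hC : {a | τ ++ [a] ∈ T}.Finite :=
      hTfin.preimage ((List.append_right_injective τ).comp fun _ _ => List.singleton_inj.1).injOn
    obtain ⟨a₀, ha₀⟩ : ∃ a, τ ++ [a] ∈ T := by simpa [IsLeaf, hτ] using hl
    have hcard : Fintype.card ι * g τ.length ≤ hC.toFinset.card := by
      have := hT.2.2.2 τ hτ hστ hl
      rwa [hC.encard_eq_coe_toFinset_card, Nat.cast_le] at this
    obtain ⟨i, A, -, hA, hgA, hAi⟩ := Finset.exists_subset_le_card_of_forall_exists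
      ⟨a₀, by simpa using ha₀⟩
      (fun a ha => ih (by simpa using ha) (hστ.trans (List.prefix_append τ [a]))
        (by simp only [List.length_append, List.length_singleton]; omega))
      hcard
    exact ⟨i, bigAbove_of_forall_append hA hgA hAi⟩

theorem bigness_pigeonhole_general (g : ℕ → ℕ) (N : ℕ) (σ : List ℕ)
    (S : Fin N → Set (List ℕ))
    (hbig : BigAbove (fun n => N * g n) σ (⋃ j : Fin N, S j)) :
    ∃ j : Fin N, BigAbove g σ (S j) := by
  obtain ⟨T, hTfin, hT, hleaf⟩ := hbig
  exact exists_bigAbove_of_bushyAbove_card_mul hTfin (by simpa using hT) hleaf hT.2.1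
    (List.prefix_refl σ)

/-- Bigness pigeonhole: if `⋃ j, S j` (over `N ≥ 1` sets) is `N·g`-big above `σ`,
then some `S j` is `g`-big above `σ`. -/
theorem bigness_pigeonhole (g : ℕ → ℕ) (N : ℕ) (hN : 1 ≤ N) (σ : List ℕ)
    (S : Fin N → Set (List ℕ))
    (hbig : BigAbove (fun n => N * g n) σ (⋃ j : Fin N, S j)) :
    ∃ j : Fin N, BigAbove g σ (S j) :=
  bigness_pigeonhole_general g N σ S hbig
end

section
/- (Avoidance sets are small) Let c : ℕ and let A : ℕ → Finset ℕ be a family of finite sets of natural numbers with (A n).card ≤ c for every n. Then the set B = {σ : ∃ n < |σ|, σ(n) ∈ A n} of strings is (c+1)-small above the empty string, where c+1 denotes the constant function n ↦ c+1. -/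
/-!
In a finite `(c+1)`-bushy tree, take a longest string `τ` avoiding every `A n`. If `τ` had
children, at least `c + 1` values would extend it inside the tree while at most `c` are
forbidden, so some child would avoid as well; hence `τ` is a leaf lying outside the set.
-/

theorem Set.Finite.exists_isLeaf {T : Set (List ℕ)} (hT : T.Finite) {P : List ℕ → Prop}
    (hP : ∃ τ ∈ T, P τ)
    (hstep : ∀ τ ∈ T, P τ → ¬ IsLeaf T τ → ∃ a, τ ++ [a] ∈ T ∧ P (τ ++ [a])) :
    ∃ τ, IsLeaf T τ ∧ P τ := by
  obtain ⟨τ, ⟨hτT, hτP⟩, hmax⟩ :=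
    (hT.subset fun _ h => h.1 : {τ | τ ∈ T ∧ P τ}.Finite).exists_maximalFor List.length _ hP
  by_contra! hno
  obtain ⟨a, haT, haP⟩ := hstep τ hτT hτP (hno τ · hτP)
  have := hmax ⟨haT, haP⟩ (by simp)
  simp at this

theorem BushyAbove.exists_child_notMem {h : ℕ → ℕ} {σ : List ℕ} {T : Set (List ℕ)}
    (hT : BushyAbove h σ T) {τ : List ℕ} (hτ : τ ∈ T) (hστ : σ <+: τ) (hleaf : ¬ IsLeaf T τ)
    (F : Finset ℕ) (hF : F.card < h τ.length) : ∃ a ∉ F, τ ++ [a] ∈ T := by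
  by_contra! hsub
  have : (h τ.length : ℕ∞) ≤ F.card :=
    calc (h τ.length : ℕ∞)
        ≤ {a | τ ++ [a] ∈ T}.encard := hT.2.2.2 τ hτ hστ hleaf
      _ ≤ (F : Set ℕ).encard := Set.encard_mono fun a ha => by_contra fun haF => hsub a haF ha
      _ = F.card := Set.encard_coe_eq_coe_finsetCard F
  exact absurd (by exact_mod_cast this) hF.not_ge

def Avoids (A : ℕ → Finset ℕ) (τ : List ℕ) : Prop :=
  ∀ n (hn : n < τ.length), τ[n] ∉ A n

theorem avoids_nil (A : ℕ → Finset ℕ) : Avoids A [] := fun _ hn => absurd hn (Nat.not_lt_zero _)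

theorem Avoids.append_singleton {A : ℕ → Finset ℕ} {τ : List ℕ} {a : ℕ} (hτ : Avoids A τ)
    (ha : a ∉ A τ.length) : Avoids A (τ ++ [a]) := by
  intro n hn
  rw [List.length_append, List.length_singleton] at hn
  rcases Nat.lt_succ_iff_lt_or_eq.mp hn with hlt | rfl
  · rw [List.getElem_append_left hlt]
    exact hτ n hlt
  · simpa using ha

/-- Avoidance sets are small: if each `A n` has at most `c` elements, then the set of
strings `σ` with `σ(n) ∈ A n` for some `n < |σ|` is `(c+1)`-small above the empty string. -/
theorem avoidance_sets_small (c : ℕ) (A : ℕ → Finset ℕ) (hA : ∀ n, (A n).card ≤ c) :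
    SmallAbove (fun _ => c + 1) []
      {σ : List ℕ | ∃ n : ℕ, ∃ hn : n < σ.length, σ.get ⟨n, hn⟩ ∈ A n} := by
  rintro ⟨T, hTfin, hT, hleaves⟩
  obtain ⟨τ, hτleaf, hτ⟩ := hTfin.exists_isLeaf ⟨[], hT.2.1, avoids_nil A⟩
    fun τ hτT hτ hnl => by
      obtain ⟨a, ha, haT⟩ :=
        hT.exists_child_notMem hτT τ.nil_prefix hnl (A τ.length) (Nat.lt_succ_of_le (hA _))
      exact ⟨a, haT, hτ.append_singleton ha⟩
  obtain ⟨n, hn, hmem⟩ := hleaves τ hτleaf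
  exact hτ n hn hmem
end

section
/- The set B_DNC = {σ : ∃ e < |σ|, φ_e(e) converges and σ(e) = φ_e(e)} of strings is 2-small above the empty string, where 2 denotes the constant function n ↦ 2. -/
/-! A longest string of a finite `h`-bushy tree that extends `σ` and never takes a forbidden
value `τ(e) ∈ F e` cannot be a leaf, because leaves take a forbidden value, and cannot be an
inner node either: it has at least `h |τ|` children, more than the `|F |τ||` forbidden values,
so one child still avoids `F`. For `B_DNC` the forbidden set at position `e` is the at most
one value of `φ_e(e)`, fewer than the two children a `2`-bushy tree provides. -/

def AvoidsForbidden (F : ℕ → Set ℕ) (τ : List ℕ) : Prop :=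
  ∀ e : ℕ, ∀ he : e < τ.length, τ.get ⟨e, he⟩ ∉ F e

theorem avoidsForbidden_append_singleton {F : ℕ → Set ℕ} {τ : List ℕ} {a : ℕ} :
    AvoidsForbidden F (τ ++ [a]) ↔ AvoidsForbidden F τ ∧ a ∉ F τ.length := by
  simp only [AvoidsForbidden, List.get_eq_getElem, List.length_append, List.length_singleton]
  constructor
  · intro h
    refine ⟨fun e he => ?_, ?_⟩
    · simpa [List.getElem_append_left he] using h e (by omega)
    · simpa using h τ.length (by omega)
  · rintro ⟨hτ, ha⟩ e he
    rcases Nat.lt_succ_iff_lt_or_eq.mp he with he | rfl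
    · simpa [List.getElem_append_left he] using hτ e he
    · simpa using ha

theorem BushyAbove.exists_child_not_mem {h : ℕ → ℕ} {σ τ : List ℕ} {T : Set (List ℕ)}
    (hT : BushyAbove h σ T) (hτ : τ ∈ T) (hστ : σ <+: τ) (hleaf : ¬ IsLeaf T τ)
    {S : Set ℕ} (hS : S.encard < h τ.length) : ∃ a, τ ++ [a] ∈ T ∧ a ∉ S :=
  Set.not_subset.mp fun hsub =>
    ((hT.2.2.2 τ hτ hστ hleaf).trans (Set.encard_le_encard hsub)).not_gt hS

theorem smallAbove_of_encard_forbidden_lt {h : ℕ → ℕ} {F : ℕ → Set ℕ}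
    (hF : ∀ n, (F n).encard < h n) {σ : List ℕ} (hσ : AvoidsForbidden F σ) :
    SmallAbove h σ {τ | ∃ e : ℕ, ∃ he : e < τ.length, τ.get ⟨e, he⟩ ∈ F e} := by
  rintro ⟨T, hfin, hT, hleaves⟩
  have hgood : {τ | τ ∈ T ∧ σ <+: τ ∧ AvoidsForbidden F τ}.Finite :=
    hfin.subset fun _ hτ => hτ.1
  obtain ⟨τ, ⟨hτT, hστ, hτ⟩, hmax⟩ :=
    hgood.exists_maximalFor List.length _ ⟨σ, hT.2.1, List.prefix_refl σ, hσ⟩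
  by_cases hleaf : IsLeaf T τ
  · obtain ⟨e, he, hmem⟩ := hleaves τ hleaf
    exact hτ e he hmem
  · obtain ⟨a, haT, haF⟩ := hT.exists_child_not_mem hτT hστ hleaf (hF τ.length)
    have hlonger := hmax (j := τ ++ [a])
      ⟨haT, hστ.trans (List.prefix_append τ [a]), avoidsForbidden_append_singleton.mpr ⟨hτ, haF⟩⟩
      (by simp)
    simp at hlonger

theorem encard_setOf_mem_part_le_one {α : Type*} (p : Part α) : {a | a ∈ p}.encard ≤ 1 :=
  Set.encard_le_one_iff.mpr fun _ _ ha hb => Part.mem_unique ha hb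

/-- The set `B_DNC` of strings that are not initial segments of any DNC function
is 2-small above the empty string. -/
theorem BDNC_small :
    SmallAbove (fun _ => 2) []
      {σ : List ℕ | ∃ e : ℕ, ∃ he : e < σ.length,
        σ.get ⟨e, he⟩ ∈ (Denumerable.ofNat Nat.Partrec.Code e).eval e} :=
  smallAbove_of_encard_forbidden_lt
    (F := fun e => {a | a ∈ (Denumerable.ofNat Nat.Partrec.Code e).eval e})
    (fun e => (encard_setOf_mem_part_le_one _).trans_lt (by norm_num))
    (fun _ he => absurd he (Nat.not_lt_zero _))
end
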